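/- Failure of sequentialization for the Danos–Regnier switching: for any dual pair (C, C*) of n-ary generalized connectives with C ≠ ⊗^n and C ≠ ⅋^n (i.e., P_C is neither the set of all singletons nor the one-class partition), the proof-structure S with exactly two terminal nodes C(A₁,…,Aₙ) and C*(~A₁,…,~Aₙ) (A_i atoms, joined by atomic axiom links) is correct in the sense of the Danos–Regnier switching but is not sequentializable; hence there exists a Danos–Regnier-correct proof-structure that is not sequentializable. -/

import Mathlib

/-! ## Partitions of `{1,…,n}`, meeting graphs, orthogonality (Danos–Regnier) -/

/-- A partition of `{1,…,n}`, represented as a `Finpartition` of `Fin n`. -/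
abbrev SetPartition (n : ℕ) := Finpartition (Finset.univ : Finset (Fin n))

/-- The (simple graph underlying the) meeting graph `G(p,q)` of two partitions of `{1,…,n}`:
its vertices are the classes of `p` together with the classes of `q`, and a class of `p` is
adjacent to a class of `q` iff some `i ∈ {1,…,n}` belongs to both (in the meeting multigraph
there is one edge for each such `i`). -/
def meetingGraph {n : ℕ} (p q : SetPartition n) :
    SimpleGraph ({c // c ∈ p.parts} ⊕ {d // d ∈ q.parts}) :=
  SimpleGraph.fromRel fun a b =>
    ∃ (c : {c // c ∈ p.parts}) (d : {d // d ∈ q.parts}),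
      ((c : Finset (Fin n)) ∩ (d : Finset (Fin n))).Nonempty ∧
      a = Sum.inl c ∧ b = Sum.inr d

/-- `p ⊥ q` : the meeting multigraph `G(p,q)` is connected and acyclic.  The meeting
multigraph has exactly `n` edges (one per element of `{1,…,n}`), and a connected multigraph
is acyclic iff its number of edges is exactly one less than its number of vertices; so
`G(p,q)` is connected and acyclic iff it is connected (equivalently, the underlying simple
graph is connected) and `n + 1 = (#classes of p) + (#classes of q)`. -/
def Finpartition.Orthogonal {n : ℕ} (p q : SetPartition n) : Prop :=
  (meetingGraph p q).Connected ∧ n + 1 = p.parts.card + q.parts.card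

/-- Orthogonality of two partition sets: `P ⊥ Q` iff `p ⊥ q` for all `p ∈ P`, `q ∈ Q`. -/
def orthSet {n : ℕ} (P Q : Set (SetPartition n)) : Prop :=
  ∀ p ∈ P, ∀ q ∈ Q, p.Orthogonal q

/-- `P^⊥`, the maximal partition set orthogonal to `P`. -/
def orthCompl {n : ℕ} (P : Set (SetPartition n)) : Set (SetPartition n) :=
  {q | ∀ p ∈ P, p.Orthogonal q}

/-- The partition set of `⊗ⁿ` : the single partition of `{1,…,n}` into singleton classes. -/
def IsTensorSet {n : ℕ} (R : Set (SetPartition n)) : Prop :=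
  R = {p : SetPartition n | ∀ c ∈ p.parts, c.card = 1}

/-- The partition set of `⅋ⁿ` : the single partition of `{1,…,n}` with one class. -/
def IsParSet {n : ℕ} (R : Set (SetPartition n)) : Prop :=
  R = {p : SetPartition n | p.parts = {Finset.univ}}

/-! ## Generalized multiplicative connectives and the sequent calculus `MLL(Cᵢ)` -/

/-- An `n`-ary generalized (multiplicative) connective `C` together with its dual `C*`:
a pair of nonempty finite partition sets of `{1,…,n}` with `(P_C)^⊥ = P_{C*}` and
`(P_{C*})^⊥ = P_C`.  `rules` is the partition set of the introduction (right) rules of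
`C`, and `dualRules` the one of its dual `C*`. -/
structure GenConn : Type where
  arity : ℕ
  rules : Set (SetPartition arity)
  dualRules : Set (SetPartition arity)
  rules_nonempty : rules.Nonempty
  rules_finite : rules.Finite
  dualRules_nonempty : dualRules.Nonempty
  dualRules_finite : dualRules.Finite
  orth : orthCompl rules = dualRules
  orth' : orthCompl dualRules = rules

/-- Formulas of `MLL(Cᵢ)`: built from atoms `P` and their duals `~P` by `⊗`, `⅋` and the
generalized connectives `Cᵢ` (with constructor `conn i`) and their duals `Cᵢ*` (with
constructor `dconn i`), where `i` ranges over a signature `I` and `Csig i` records the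
arity and the partition sets of `Cᵢ`. -/
inductive Formula (I : Type) (Csig : I → GenConn) : Type
  | pos : ℕ → Formula I Csig
  | neg : ℕ → Formula I Csig
  | tens : Formula I Csig → Formula I Csig → Formula I Csig
  | parr : Formula I Csig → Formula I Csig → Formula I Csig
  | conn : (i : I) → (Fin (Csig i).arity → Formula I Csig) → Formula I Csig
  | dconn : (i : I) → (Fin (Csig i).arity → Formula I Csig) → Formula I Csig

/-- The dual `~A` of a formula, extended by De Morgan and
`~(Cᵢ(A₁,…,Aₘ)) = Cᵢ*(~A₁,…,~Aₘ)`. -/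
def Formula.dual {I : Type} {Csig : I → GenConn} : Formula I Csig → Formula I Csig
  | .pos m => .neg m
  | .neg m => .pos m
  | .tens A B => .parr A.dual B.dual
  | .parr A B => .tens A.dual B.dual
  | .conn i A => .dconn i fun k => (A k).dual
  | .dconn i A => .conn i fun k => (A k).dual

/-- Provability in the one-sided sequent calculus `MLL(Cᵢ)` (sequents are multisets of
formulas).  The rules are the axiom `⊢ P, ~P` for atomic `P`, the cut rule (allowed only
when `cutEnabled = true`), the `⊗`- and `⅋`-rules of MLL, and, for each generalized
connective `Cᵢ` and each partition `p ∈ P_{Cᵢ}` with classes `c`, the introduction rule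
with premises `⊢ Γ_c, A_{c₁},…,A_{cₘ}` (one for each class `c` of `p`) and conclusion
`⊢ Γ₁,…,Γ_k, Cᵢ(A₁,…,Aₘ)`; dually for `Cᵢ*` using `p ∈ P_{Cᵢ*}`. -/
inductive Provable {I : Type} {Csig : I → GenConn} (cutEnabled : Bool) :
    Multiset (Formula I Csig) → Prop
  | ax (m : ℕ) : Provable cutEnabled {Formula.pos m, Formula.neg m}
  | cut (A : Formula I Csig) (Γ Δ : Multiset (Formula I Csig)) (hcut : cutEnabled = true) :
      Provable cutEnabled (A ::ₘ Γ) → Provable cutEnabled (A.dual ::ₘ Δ) →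
      Provable cutEnabled (Γ + Δ)
  | tens (A B : Formula I Csig) (Γ Δ : Multiset (Formula I Csig)) :
      Provable cutEnabled (A ::ₘ Γ) → Provable cutEnabled (B ::ₘ Δ) →
      Provable cutEnabled (Formula.tens A B ::ₘ (Γ + Δ))
  | parr (A B : Formula I Csig) (Γ : Multiset (Formula I Csig)) :
      Provable cutEnabled (A ::ₘ B ::ₘ Γ) →
      Provable cutEnabled (Formula.parr A B ::ₘ Γ)
  | conn (i : I) (A : Fin (Csig i).arity → Formula I Csig)
      (p : SetPartition (Csig i).arity) (hp : p ∈ (Csig i).rules)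
      (Γ : {c // c ∈ p.parts} → Multiset (Formula I Csig)) :
      (∀ c : {c // c ∈ p.parts},
        Provable cutEnabled (Γ c + Multiset.map A (c : Finset (Fin (Csig i).arity)).val)) →
      Provable cutEnabled (Formula.conn i A ::ₘ ∑ c : {c // c ∈ p.parts}, Γ c)
  | dconn (i : I) (A : Fin (Csig i).arity → Formula I Csig)
      (p : SetPartition (Csig i).arity) (hp : p ∈ (Csig i).dualRules)
      (Γ : {c // c ∈ p.parts} → Multiset (Formula I Csig)) :
      (∀ c : {c // c ∈ p.parts},
        Provable cutEnabled (Γ c + Multiset.map A (c : Finset (Fin (Csig i).arity)).val)) →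
      Provable cutEnabled (Formula.dconn i A ::ₘ ∑ c : {c // c ∈ p.parts}, Γ c)

/-! ## Proof structures for `MLL(Cᵢ)` -/

/-- The kinds of links of a proof-structure for `MLL(Cᵢ)`: axiom links, cut links,
`⊗`-links, `⅋`-links, `Cᵢ`-links and `Cᵢ*`-links. -/
inductive LinkKind (I : Type) : Type
  | ax : LinkKind I
  | cut : LinkKind I
  | tens : LinkKind I
  | parr : LinkKind I
  | conn : I → LinkKind I
  | dconn : I → LinkKind I

/-- The raw data of a proof-structure: a graph whose nodes are labelled by formulas and
whose edges are organized into links; each link has a kind, an (ordered) list of premise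
nodes and a list of conclusion nodes. -/
structure PrePS (I : Type) (Csig : I → GenConn) : Type 1 where
  Node : Type
  label : Node → Formula I Csig
  Link : Type
  kind : Link → LinkKind I
  prem : Link → List Node
  concl : Link → List Node

/-- A proof-structure for `MLL(Cᵢ)`: a nonempty finite graph of formula-labelled nodes
organized into axiom links (two conclusions `A` and `~A`, no premises), cut links (two
premises `A` and `~A`, no conclusion), `⊗`- and `⅋`-links, and `C`-links (premises
`A₁,…,Aₘ`, conclusion `Cᵢ(A₁,…,Aₘ)`, resp. `Cᵢ*(A₁,…,Aₘ)`), such that each node is the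
premise of at most one link and the conclusion of exactly one link. -/
structure ProofStructure (I : Type) (Csig : I → GenConn) : Type 1 where
  pre : PrePS I Csig
  node_finite : Finite pre.Node
  node_nonempty : Nonempty pre.Node
  link_finite : Finite pre.Link
  wf_ax : ∀ l, pre.kind l = .ax → pre.prem l = [] ∧
      ∃ a b, pre.concl l = [a, b] ∧ pre.label b = (pre.label a).dual
  wf_cut : ∀ l, pre.kind l = .cut → pre.concl l = [] ∧
      ∃ a b, pre.prem l = [a, b] ∧ pre.label b = (pre.label a).dual
  wf_tens : ∀ l, pre.kind l = .tens → ∃ a b c, pre.prem l = [a, b] ∧ pre.concl l = [c] ∧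
      pre.label c = .tens (pre.label a) (pre.label b)
  wf_parr : ∀ l, pre.kind l = .parr → ∃ a b c, pre.prem l = [a, b] ∧ pre.concl l = [c] ∧
      pre.label c = .parr (pre.label a) (pre.label b)
  wf_conn : ∀ l i, pre.kind l = .conn i →
      ∃ (args : Fin (Csig i).arity → pre.Node) (c : pre.Node),
        pre.prem l = List.ofFn args ∧ pre.concl l = [c] ∧
        pre.label c = .conn i fun k => pre.label (args k)
  wf_dconn : ∀ l i, pre.kind l = .dconn i →
      ∃ (args : Fin (Csig i).arity → pre.Node) (c : pre.Node),
        pre.prem l = List.ofFn args ∧ pre.concl l = [c] ∧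
        pre.label c = .dconn i fun k => pre.label (args k)
  prem_nodup : ∀ l, (pre.prem l).Nodup
  concl_nodup : ∀ l, (pre.concl l).Nodup
  concl_unique : ∀ v : pre.Node, ∃! l, v ∈ pre.concl l
  prem_unique : ∀ (v : pre.Node) (l l' : pre.Link),
      v ∈ pre.prem l → v ∈ pre.prem l' → l = l'

namespace PrePS

variable {I : Type} {Csig : I → GenConn}

/-- A node is terminal if it is the premise of no link. -/
def Terminal (S : PrePS I Csig) (v : S.Node) : Prop := ∀ l, v ∉ S.prem l

/-- A link is terminal if all its conclusions are terminal nodes. -/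
def TerminalLink (S : PrePS I Csig) (l : S.Link) : Prop :=
  ∀ v ∈ S.concl l, S.Terminal v

/-- The full graph of a proof-structure: the two conclusions of an axiom link are
adjacent, the two premises of a cut link are adjacent, and each premise of a link is
adjacent to each of its conclusions. -/
def fullGraph (S : PrePS I Csig) : SimpleGraph S.Node :=
  SimpleGraph.fromRel fun a b =>
    (∃ l, S.kind l = .ax ∧ S.concl l = [a, b]) ∨
    (∃ l, S.kind l = .cut ∧ S.prem l = [a, b]) ∨
    (∃ l, a ∈ S.prem l ∧ b ∈ S.concl l)

/-- A terminal link is splitting if removing its (conclusion) node and the incident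
edges separates the proof-structure into disjoint sub-proof-structures, i.e. the induced
graph on the remaining nodes is disconnected. -/
def Splitting (S : PrePS I Csig) (l : S.Link) : Prop :=
  ¬ (S.fullGraph.induce {v : S.Node | v ∉ S.concl l}).Connected

/-- A `⅋ᵏ`-link: a binary `⅋`-link, or a (dual) generalized-connective link whose
partition set is the one of `⅋ᵏ`. -/
def IsParLikeLink (S : PrePS I Csig) (l : S.Link) : Prop :=
  S.kind l = .parr ∨
  (∃ i, S.kind l = .conn i ∧ IsParSet (Csig i).rules) ∨
  (∃ i, S.kind l = .dconn i ∧ IsParSet (Csig i).dualRules)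

/-- A `C`-link (in the wide sense used for splitting): a `⊗`-link or a
generalized-connective link, which is not a `⅋ᵏ`-link. -/
def IsCLink (S : PrePS I Csig) (l : S.Link) : Prop :=
  (S.kind l = .tens ∨ (∃ i, S.kind l = .conn i) ∨ (∃ i, S.kind l = .dconn i)) ∧
  ¬ S.IsParLikeLink l

/-- The correctness graph determined by a selection `sel` of premise positions for each
link: the two conclusions of an axiom link are adjacent, the two premises of a cut link
are adjacent, and the `k`-th premise of a link is adjacent to its conclusion exactly when
`k ∈ sel l`. -/
def selGraph (S : PrePS I Csig) (sel : S.Link → Finset ℕ) : SimpleGraph S.Node :=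
  SimpleGraph.fromRel fun a b =>
    (∃ l, S.kind l = .ax ∧ S.concl l = [a, b]) ∨
    (∃ l, S.kind l = .cut ∧ S.prem l = [a, b]) ∨
    (∃ l, ∃ k ∈ sel l, (S.prem l)[k]? = some a ∧ b ∈ S.concl l)

end PrePS

/-- A transversal of a partition `p`: a set containing exactly one element of each class
of `p`. -/
def IsTransversal {m : ℕ} (p : SetPartition m) (t : Finset (Fin m)) : Prop :=
  ∀ c ∈ p.parts, ∃! x, x ∈ t ∧ x ∈ c

/-- A **partition switching** of a proof-structure: for each generalized-connective link
it selects a partition `p` in the corresponding partition set together with exactly one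
element of each class of `p` (the premise edges to the selected elements are kept, all
other premise edges of the link are deleted).  On a `⊗`-link both premise edges are kept
(the transversal of `{(1),(2)}`), on a `⅋`-link exactly one premise edge is kept
(a transversal of `{(1,2)}`). -/
structure PartitionSwitching {I : Type} {Csig : I → GenConn} (S : PrePS I Csig) where
  sel : S.Link → Finset ℕ
  valid_tens : ∀ l, S.kind l = .tens → sel l = {0, 1}
  valid_parr : ∀ l, S.kind l = .parr → sel l = {0} ∨ sel l = {1}
  valid_conn : ∀ l i, S.kind l = .conn i → ∃ p ∈ (Csig i).rules,
      ∃ t : Finset (Fin (Csig i).arity), IsTransversal p t ∧ sel l = t.image Fin.val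
  valid_dconn : ∀ l i, S.kind l = .dconn i → ∃ p ∈ (Csig i).dualRules,
      ∃ t : Finset (Fin (Csig i).arity), IsTransversal p t ∧ sel l = t.image Fin.val
  valid_other : ∀ l, S.kind l = .ax ∨ S.kind l = .cut → sel l = ∅

/-- A proof-structure is a **proof-net in the sense of the partition switching** iff for
every partition switching the associated correctness graph is connected and acyclic. -/
def PrePS.PartitionProofNet {I : Type} {Csig : I → GenConn} (S : PrePS I Csig) : Prop :=
  ∀ sw : PartitionSwitching S,
    (S.selGraph sw.sel).Connected ∧ (S.selGraph sw.sel).IsAcyclic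

/-! ## The Danos–Regnier switching for generalized connectives -/

/-- The partition set of a partition of `Fin m`, re-encoded as a set of sets of premise
positions. -/
def partsToNat {m : ℕ} (p : SetPartition m) : Finset (Finset ℕ) :=
  p.parts.image fun c => c.image Fin.val

/-- A **Danos–Regnier switching** of a proof-structure: for each generalized-connective
link it selects a partition `p` in the corresponding partition set together with one
class of `p`.  (Binary `⊗`-links carry the partition `{(1),(2)}` and `⅋`-links the
partition `{(1,2)}`.) -/
structure DRSwitching {I : Type} {Csig : I → GenConn} (S : PrePS I Csig) where
  part : S.Link → Finset (Finset ℕ)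
  selClass : S.Link → Finset ℕ
  sel_mem : ∀ l, (S.kind l = .tens ∨ S.kind l = .parr ∨
      (∃ i, S.kind l = .conn i) ∨ (∃ i, S.kind l = .dconn i)) → selClass l ∈ part l
  valid_tens : ∀ l, S.kind l = .tens → part l = {{0}, {1}}
  valid_parr : ∀ l, S.kind l = .parr → part l = {({0, 1} : Finset ℕ)}
  valid_conn : ∀ l i, S.kind l = .conn i → ∃ p ∈ (Csig i).rules, part l = partsToNat p
  valid_dconn : ∀ l i, S.kind l = .dconn i → ∃ p ∈ (Csig i).dualRules, part l = partsToNat p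
  valid_other : ∀ l, S.kind l = .ax ∨ S.kind l = .cut → part l = ∅ ∧ selClass l = ∅

/-- The correctness graph of a Danos–Regnier switching: the two conclusions of an axiom
link are adjacent and the two premises of a cut link are adjacent; at each switched link
the premises belonging to the same class of the chosen partition are connected to one
another (consecutive premises of a class are adjacent), and every edge from a class to
the node of the link is deleted except one edge from the selected class (the premise of
the selected class with least position is adjacent to the conclusion). -/
def PrePS.drGraph {I : Type} {Csig : I → GenConn} (S : PrePS I Csig)
    (sw : DRSwitching S) : SimpleGraph S.Node :=
  SimpleGraph.fromRel fun a b =>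
    (∃ l, S.kind l = .ax ∧ S.concl l = [a, b]) ∨
    (∃ l, S.kind l = .cut ∧ S.prem l = [a, b]) ∨
    (∃ l, ∃ c ∈ sw.part l, ∃ j ∈ c, ∃ k ∈ c, j < k ∧ (∀ x ∈ c, ¬ (j < x ∧ x < k)) ∧
      (S.prem l)[j]? = some a ∧ (S.prem l)[k]? = some b) ∨
    (∃ l j, (∃ h : (sw.selClass l).Nonempty, j = (sw.selClass l).min' h) ∧
      (S.prem l)[j]? = some a ∧ b ∈ S.concl l)

/-- A proof-structure is **correct in the sense of the Danos–Regnier switching** iff for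
every Danos–Regnier switching the associated correctness graph is connected and
acyclic. -/
def PrePS.DRProofNet {I : Type} {Csig : I → GenConn} (S : PrePS I Csig) : Prop :=
  ∀ sw : DRSwitching S, (S.drGraph sw).Connected ∧ (S.drGraph sw).IsAcyclic

/-- `S` is (isomorphic to) the proof-structure with exactly two terminal nodes
`Cᵢ(A₁,…,Aₙ)` and `Cᵢ*(~A₁,…,~Aₙ)`, where `A₁,…,Aₙ` are the atoms `a 1, …, a n`,
consisting of a `Cᵢ`-link, a `Cᵢ*`-link, and, for each `k`, an atomic axiom link joining
`A_k` and `~A_k`. -/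
def IsExpansionPS {I : Type} {Csig : I → GenConn} (i : I) (a : Fin (Csig i).arity → ℕ)
    (S : PrePS I Csig) : Prop :=
  ∃ (eN : S.Node ≃ (Fin (Csig i).arity ⊕ Fin (Csig i).arity) ⊕ Bool)
    (eL : S.Link ≃ Fin (Csig i).arity ⊕ Bool),
    (∀ k, S.label (eN.symm (.inl (.inl k))) = .pos (a k)) ∧
    (∀ k, S.label (eN.symm (.inl (.inr k))) = .neg (a k)) ∧
    S.label (eN.symm (.inr true)) = .conn i (fun k => .pos (a k)) ∧
    S.label (eN.symm (.inr false)) = .dconn i (fun k => .neg (a k)) ∧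
    (∀ k, S.kind (eL.symm (.inl k)) = .ax ∧
      S.prem (eL.symm (.inl k)) = [] ∧
      S.concl (eL.symm (.inl k)) = [eN.symm (.inl (.inl k)), eN.symm (.inl (.inr k))]) ∧
    S.kind (eL.symm (.inr true)) = .conn i ∧
    S.prem (eL.symm (.inr true)) = List.ofFn (fun k => eN.symm (.inl (.inl k))) ∧
    S.concl (eL.symm (.inr true)) = [eN.symm (.inr true)] ∧
    S.kind (eL.symm (.inr false)) = .dconn i ∧
    S.prem (eL.symm (.inr false)) = List.ofFn (fun k => eN.symm (.inl (.inr k))) ∧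
    S.concl (eL.symm (.inr false)) = [eN.symm (.inr false)]

/-! ## Sequent proofs of `MLL(Cᵢ)` with tracked occurrences, and the translation `S(−)`
to proof structures -/

/-- Sequent-calculus proofs of `MLL(Cᵢ)` with sequents given as lists (so that formula
occurrences are tracked and the translation to proof-structures is well defined).  The
`exch` constructor permutes a sequent (via an explicit bijection of positions); in the
rules for the generalized connectives the premises are indexed by an enumeration
`cls : Fin k → _` of the classes of the chosen partition `p`. -/
inductive Deriv {I : Type} (Csig : I → GenConn) : List (Formula I Csig) → Type
  | ax (m : ℕ) : Deriv Csig [.pos m, .neg m]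
  | exch {Γ Δ : List (Formula I Csig)} (e : Fin Δ.length ≃ Fin Γ.length)
      (he : ∀ k, Δ.get k = Γ.get (e k)) : Deriv Csig Γ → Deriv Csig Δ
  | cut {Γ Δ : List (Formula I Csig)} (A : Formula I Csig) :
      Deriv Csig (A :: Γ) → Deriv Csig (A.dual :: Δ) → Deriv Csig (Γ ++ Δ)
  | tens {Γ Δ : List (Formula I Csig)} (A B : Formula I Csig) :
      Deriv Csig (A :: Γ) → Deriv Csig (B :: Δ) →
      Deriv Csig (.tens A B :: (Γ ++ Δ))
  | parr {Γ : List (Formula I Csig)} (A B : Formula I Csig) :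
      Deriv Csig (A :: B :: Γ) → Deriv Csig (.parr A B :: Γ)
  | conn {i : I} (A : Fin (Csig i).arity → Formula I Csig)
      (p : SetPartition (Csig i).arity) (hp : p ∈ (Csig i).rules)
      {k : ℕ} (cls : Fin k → Finset (Fin (Csig i).arity))
      (hcls : ∀ c, c ∈ p.parts ↔ ∃ j, c = cls j) (hinj : Function.Injective cls)
      (Γs : Fin k → List (Formula I Csig))
      (prems : ∀ j, Deriv Csig (Γs j ++ ((cls j).sort (· ≤ ·)).map A)) :
      Deriv Csig (.conn i A :: (List.ofFn Γs).flatten)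
  | dconn {i : I} (A : Fin (Csig i).arity → Formula I Csig)
      (p : SetPartition (Csig i).arity) (hp : p ∈ (Csig i).dualRules)
      {k : ℕ} (cls : Fin k → Finset (Fin (Csig i).arity))
      (hcls : ∀ c, c ∈ p.parts ↔ ∃ j, c = cls j) (hinj : Function.Injective cls)
      (Γs : Fin k → List (Formula I Csig))
      (prems : ∀ j, Deriv Csig (Γs j ++ ((cls j).sort (· ≤ ·)).map A)) :
      Deriv Csig (.dconn i A :: (List.ofFn Γs).flatten)

/-- The result of translating a sequent proof: the underlying data of a proof-structure,
together with the map sending the position of each formula occurrence of the end-sequent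
to the corresponding (terminal) node. -/
structure TransRes (I : Type) (Csig : I → GenConn) : Type 1 where
  S : PrePS I Csig
  cpos : ℕ → S.Node

/-- The standard recursive translation `S(−)` from sequent proofs of `MLL(Cᵢ)` to proof
structures. -/
noncomputable def toPre {I : Type} {Csig : I → GenConn} :
    {Γ : List (Formula I Csig)} → Deriv Csig Γ → TransRes I Csig
  | _, .ax m =>
    { S := { Node := Fin 2, label := ![.pos m, .neg m], Link := Unit,
             kind := fun _ => .ax, prem := fun _ => [], concl := fun _ => [0, 1] },
      cpos := fun n => if n = 0 then 0 else 1 }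
  | _, @Deriv.exch _ _ _ Δ e _ d =>
    let R := toPre d
    { S := R.S,
      cpos := fun n => if h : n < Δ.length then R.cpos (e ⟨n, h⟩) else R.cpos 0 }
  | _, @Deriv.cut _ _ Γ Δ A d₁ d₂ =>
    let R₁ := toPre d₁
    let R₂ := toPre d₂
    { S := { Node := R₁.S.Node ⊕ R₂.S.Node,
             label := Sum.elim R₁.S.label R₂.S.label,
             Link := (R₁.S.Link ⊕ R₂.S.Link) ⊕ Unit,
             kind := Sum.elim (Sum.elim R₁.S.kind R₂.S.kind) fun _ => .cut,
             prem := Sum.elim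
               (Sum.elim (fun l => (R₁.S.prem l).map Sum.inl)
                         (fun l => (R₂.S.prem l).map Sum.inr))
               fun _ => [Sum.inl (R₁.cpos 0), Sum.inr (R₂.cpos 0)],
             concl := Sum.elim
               (Sum.elim (fun l => (R₁.S.concl l).map Sum.inl)
                         (fun l => (R₂.S.concl l).map Sum.inr))
               fun _ => [] },
      cpos := fun n => if n < Γ.length then Sum.inl (R₁.cpos (n + 1))
                       else Sum.inr (R₂.cpos (n - Γ.length + 1)) }
  | _, @Deriv.tens _ _ Γ Δ A B d₁ d₂ =>
    let R₁ := toPre d₁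
    let R₂ := toPre d₂
    { S := { Node := (R₁.S.Node ⊕ R₂.S.Node) ⊕ Unit,
             label := Sum.elim (Sum.elim R₁.S.label R₂.S.label) fun _ => .tens A B,
             Link := (R₁.S.Link ⊕ R₂.S.Link) ⊕ Unit,
             kind := Sum.elim (Sum.elim R₁.S.kind R₂.S.kind) fun _ => .tens,
             prem := Sum.elim
               (Sum.elim (fun l => (R₁.S.prem l).map fun w => Sum.inl (Sum.inl w))
                         (fun l => (R₂.S.prem l).map fun w => Sum.inl (Sum.inr w)))
               fun _ => [Sum.inl (Sum.inl (R₁.cpos 0)), Sum.inl (Sum.inr (R₂.cpos 0))],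
             concl := Sum.elim
               (Sum.elim (fun l => (R₁.S.concl l).map fun w => Sum.inl (Sum.inl w))
                         (fun l => (R₂.S.concl l).map fun w => Sum.inl (Sum.inr w)))
               fun _ => [Sum.inr ()] },
      cpos := fun n =>
        if n = 0 then Sum.inr ()
        else if n ≤ Γ.length then Sum.inl (Sum.inl (R₁.cpos n))
        else Sum.inl (Sum.inr (R₂.cpos (n - Γ.length))) }
  | _, @Deriv.parr _ _ Γ A B d =>
    let R := toPre d
    { S := { Node := R.S.Node ⊕ Unit,
             label := Sum.elim R.S.label fun _ => .parr A B,
             Link := R.S.Link ⊕ Unit,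
             kind := Sum.elim R.S.kind fun _ => .parr,
             prem := Sum.elim (fun l => (R.S.prem l).map Sum.inl)
               fun _ => [Sum.inl (R.cpos 0), Sum.inl (R.cpos 1)],
             concl := Sum.elim (fun l => (R.S.concl l).map Sum.inl)
               fun _ => [Sum.inr ()] },
      cpos := fun n => if n = 0 then Sum.inr () else Sum.inl (R.cpos (n + 1)) }
  | _, @Deriv.conn _ _ i A p hp k cls hcls hinj Γs prems =>
    let R := fun j => toPre (prems j)
    have exj : ∀ t : Fin (Csig i).arity, ∃ j, t ∈ cls j := fun t => by
      obtain ⟨c, hc, htc⟩ := p.exists_mem (Finset.mem_univ t)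
      obtain ⟨j, rfl⟩ := (hcls c).1 hc
      exact ⟨j, htc⟩
    { S := { Node := (Σ j : Fin k, (R j).S.Node) ⊕ Unit,
             label := Sum.elim (fun x => (R x.1).S.label x.2) fun _ => .conn i A,
             Link := (Σ j : Fin k, (R j).S.Link) ⊕ Unit,
             kind := Sum.elim (fun x => (R x.1).S.kind x.2) fun _ => .conn i,
             prem := Sum.elim
               (fun x => ((R x.1).S.prem x.2).map fun w => Sum.inl ⟨x.1, w⟩)
               fun _ => List.ofFn fun t : Fin (Csig i).arity =>
                 Sum.inl ⟨Classical.choose (exj t),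
                   (R (Classical.choose (exj t))).cpos
                     ((Γs (Classical.choose (exj t))).length +
                       ((cls (Classical.choose (exj t))).sort (· ≤ ·)).idxOf t)⟩,
             concl := Sum.elim
               (fun x => ((R x.1).S.concl x.2).map fun w => Sum.inl ⟨x.1, w⟩)
               fun _ => [Sum.inr ()] },
      cpos := fun n =>
        if n = 0 then Sum.inr ()
        else
          (((List.ofFn (fun j : Fin k =>
              (List.range (Γs j).length).map (fun t =>
                (Sum.inl ⟨j, (R j).cpos t⟩ :
                  (Σ j : Fin k, (R j).S.Node) ⊕ Unit)))).flatten)[n - 1]?).getD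
            (Sum.inr ()) }
  | _, @Deriv.dconn _ _ i A p hp k cls hcls hinj Γs prems =>
    let R := fun j => toPre (prems j)
    have exj : ∀ t : Fin (Csig i).arity, ∃ j, t ∈ cls j := fun t => by
      obtain ⟨c, hc, htc⟩ := p.exists_mem (Finset.mem_univ t)
      obtain ⟨j, rfl⟩ := (hcls c).1 hc
      exact ⟨j, htc⟩
    { S := { Node := (Σ j : Fin k, (R j).S.Node) ⊕ Unit,
             label := Sum.elim (fun x => (R x.1).S.label x.2) fun _ => .dconn i A,
             Link := (Σ j : Fin k, (R j).S.Link) ⊕ Unit,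
             kind := Sum.elim (fun x => (R x.1).S.kind x.2) fun _ => .dconn i,
             prem := Sum.elim
               (fun x => ((R x.1).S.prem x.2).map fun w => Sum.inl ⟨x.1, w⟩)
               fun _ => List.ofFn fun t : Fin (Csig i).arity =>
                 Sum.inl ⟨Classical.choose (exj t),
                   (R (Classical.choose (exj t))).cpos
                     ((Γs (Classical.choose (exj t))).length +
                       ((cls (Classical.choose (exj t))).sort (· ≤ ·)).idxOf t)⟩,
             concl := Sum.elim
               (fun x => ((R x.1).S.concl x.2).map fun w => Sum.inl ⟨x.1, w⟩)
               fun _ => [Sum.inr ()] },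
      cpos := fun n =>
        if n = 0 then Sum.inr ()
        else
          (((List.ofFn (fun j : Fin k =>
              (List.range (Γs j).length).map (fun t =>
                (Sum.inl ⟨j, (R j).cpos t⟩ :
                  (Σ j : Fin k, (R j).S.Node) ⊕ Unit)))).flatten)[n - 1]?).getD
            (Sum.inr ()) }

/-- An isomorphism of (the raw data of) proof-structures: label-, kind-, premise- and
conclusion-preserving bijections of nodes and links. -/
structure PreIso {I : Type} {Csig : I → GenConn} (S T : PrePS I Csig) : Type 1 where
  nodeEquiv : S.Node ≃ T.Node
  linkEquiv : S.Link ≃ T.Link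
  label_eq : ∀ v, T.label (nodeEquiv v) = S.label v
  kind_eq : ∀ l, T.kind (linkEquiv l) = S.kind l
  prem_eq : ∀ l, T.prem (linkEquiv l) = (S.prem l).map nodeEquiv
  concl_eq : ∀ l, T.concl (linkEquiv l) = (S.concl l).map nodeEquiv

/-- A proof-structure `S` is **sequentializable** if `S = S(π)` (up to isomorphism) for
some sequent proof `π` of `MLL(Cᵢ)`. -/
def Sequentializable {I : Type} {Csig : I → GenConn} (S : ProofStructure I Csig) : Prop :=
  ∃ (Γ : List (Formula I Csig)) (d : Deriv Csig Γ),
    Nonempty (PreIso S.pre (toPre d).S)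

/-!
Under a Danos–Regnier switching choosing `p ∈ P_C`, `q ∈ P_{C*}` and classes `c ∈ p`,
`d ∈ q`, the correctness graph of the expansion has the `n` axiom edges, a path through every
class of `p` and of `q`, and the two edges from `min c` to `C(A₁,…,Aₙ)` and from `min d` to
`C*(~A₁,…,~Aₙ)`. It is connected because the meeting graph of `p` and `q` is, and since
`|p| + |q| = n + 1` it has `n + (n - |p|) + (n - |q|) + 2 = 2n + 1` edges on `2n + 2` nodes:
it is a tree.

Exchanges do not change the translation of a sequent proof, and the expansion has no cut, `⊗` or
`⅋` link, so a sequent proof of it would end with the rule for `C` or for `C*`, with some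
partition `p`. Its translation has one subproof per class of `p`, linked to each other only
through the last link. In the expansion, the axiom links and the other connective link hold all
nodes except the conclusion of that last link together, so `p` has a single class. Then
`C = ⅋ⁿ`, respectively `C* = ⅋ⁿ`, that is `C = ⊗ⁿ`.
-/

namespace Finpartition

variable {n : ℕ}

lemma parts_eq_singleton_univ_of_card_eq_one {p : SetPartition n} (h : p.parts.card = 1) :
    p.parts = {Finset.univ} := by
  obtain ⟨c, hc⟩ := Finset.card_eq_one.1 h
  have hsup := p.sup_parts
  rw [hc, Finset.sup_singleton] at hsup
  rw [hc, ← hsup, id]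

lemma card_eq_one_of_card_parts_eq {p : SetPartition n} (h : p.parts.card = n) :
    ∀ c ∈ p.parts, c.card = 1 := by
  intro c hc
  have hpos : ∀ d ∈ p.parts, 1 ≤ d.card := fun d hd =>
    Finset.card_pos.2 (p.nonempty_of_mem_parts hd)
  by_contra hne
  have hlt : ∑ _d ∈ p.parts, 1 < ∑ d ∈ p.parts, d.card :=
    Finset.sum_lt_sum hpos ⟨c, hc, by have := hpos c hc; omega⟩
  simp [p.sum_card_parts, h] at hlt

lemma eq_bot_of_card_eq_one {α : Type*} [DecidableEq α] {s : Finset α} {p : Finpartition s}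
    (h : ∀ c ∈ p.parts, c.card = 1) : p = ⊥ := by
  ext c
  rw [mem_bot_iff]
  constructor
  · intro hc
    obtain ⟨x, rfl⟩ := Finset.card_eq_one.1 (h c hc)
    exact ⟨x, p.le hc (Finset.mem_singleton_self x), rfl⟩
  · rintro ⟨x, hx, rfl⟩
    obtain ⟨d, hd, hxd⟩ := p.exists_mem hx
    obtain ⟨y, rfl⟩ := Finset.card_eq_one.1 (h d hd)
    rwa [Finset.mem_singleton.1 hxd]

lemma card_parts_eq_of_enum {k : ℕ} {p : SetPartition n} {cls : Fin k → Finset (Fin n)}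
    (hcls : ∀ c, c ∈ p.parts ↔ ∃ j, c = cls j) (hinj : Function.Injective cls) :
    p.parts.card = k := by
  have hparts : p.parts = Finset.univ.image cls := by
    ext c
    simp [hcls, eq_comm]
  rw [hparts, Finset.card_image_of_injective _ hinj, Finset.card_univ, Fintype.card_fin]

end Finpartition

namespace GenConn

variable (G : GenConn) {p q : SetPartition G.arity}

lemma orthogonal_of_mem (hp : p ∈ G.rules) (hq : q ∈ G.dualRules) : p.Orthogonal q :=
  (G.orth ▸ hq : q ∈ orthCompl G.rules) p hp

lemma arity_add_one_eq (hp : p ∈ G.rules) (hq : q ∈ G.dualRules) :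
    G.arity + 1 = p.parts.card + q.parts.card :=
  (G.orthogonal_of_mem hp hq).2

lemma isParSet_of_card_parts_eq_one (hp : p ∈ G.rules) (h : p.parts.card = 1) :
    IsParSet G.rules := by
  obtain ⟨q, hq⟩ := G.dualRules_nonempty
  have hpq := G.arity_add_one_eq hp hq
  ext r
  constructor
  · intro hr
    have hrq := G.arity_add_one_eq hr hq
    exact Finpartition.parts_eq_singleton_univ_of_card_eq_one (by omega)
  · intro hr
    have hpr : p = r := Finpartition.ext (by
      rw [Finpartition.parts_eq_singleton_univ_of_card_eq_one h, hr])
    exact hpr ▸ hp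

lemma isTensorSet_of_dual_card_parts_eq_one (hq : q ∈ G.dualRules) (h : q.parts.card = 1) :
    IsTensorSet G.rules := by
  have hsingle : ∀ r ∈ G.rules, ∀ c ∈ r.parts, c.card = 1 := fun r hr =>
    Finpartition.card_eq_one_of_card_parts_eq (by have := G.arity_add_one_eq hr hq; omega)
  obtain ⟨p, hp⟩ := G.rules_nonempty
  ext r
  refine ⟨hsingle r, fun hr => ?_⟩
  have hpr : p = r := by
    rw [Finpartition.eq_bot_of_card_eq_one (hsingle p hp), Finpartition.eq_bot_of_card_eq_one hr]
  exact hpr ▸ hp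

end GenConn

section Consecutive

variable {α : Type*} [LinearOrder α]

def Finset.Consecutive (c : Finset α) (j k : α) : Prop :=
  j ∈ c ∧ k ∈ c ∧ j < k ∧ ∀ x ∈ c, ¬ (j < x ∧ x < k)

lemma SimpleGraph.reachable_of_consecutive [WellFoundedLT α] {V : Type*} {G : SimpleGraph V}
    {c : Finset α} {f : α → V} (h : ∀ j k, c.Consecutive j k → G.Adj (f j) (f k))
    {j k : α} (hj : j ∈ c) (hk : k ∈ c) : G.Reachable (f j) (f k) := by
  have hc : c.Nonempty := ⟨j, hj⟩
  suffices hmin : ∀ k ∈ c, G.Reachable (f (c.min' hc)) (f k) from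
    (hmin j hj).symm.trans (hmin k hk)
  intro k hk
  induction k using WellFoundedLT.induction with
  | _ k ih =>
  rcases (c.min'_le k hk).eq_or_lt with hkmin | hlt
  · rw [hkmin]
  · have hbelow : (c.filter (· < k)).Nonempty :=
      ⟨_, Finset.mem_filter.2 ⟨c.min'_mem hc, hlt⟩⟩
    obtain ⟨hpc, hpk⟩ := Finset.mem_filter.1 ((c.filter (· < k)).max'_mem hbelow)
    have hcons : c.Consecutive ((c.filter (· < k)).max' hbelow) k :=
      ⟨hpc, hk, hpk, fun x hx ⟨hpx, hxk⟩ =>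
        (Finset.le_max' _ x (Finset.mem_filter.2 ⟨hx, hxk⟩)).not_gt hpx⟩
    exact (ih _ hpk hpc).trans (h _ _ hcons).reachable

open Classical in
noncomputable def Finset.consecutivePairs (c : Finset α) : Finset (α × α) :=
  (c ×ˢ c).filter fun jk => c.Consecutive jk.1 jk.2

lemma Finset.mem_consecutivePairs {c : Finset α} {j k : α} :
    (j, k) ∈ c.consecutivePairs ↔ c.Consecutive j k := by
  classical
  simp only [consecutivePairs, mem_filter, mem_product, and_iff_right_iff_imp]
  exact fun h => ⟨h.1, h.2.1⟩

/-- A consecutive pair is determined by its larger element, which is not the least one. -/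
lemma Finset.card_consecutivePairs_add_one_le {c : Finset α} (hc : c.Nonempty) :
    c.consecutivePairs.card + 1 ≤ c.card := by
  have hmaps : ∀ jk ∈ c.consecutivePairs, jk.2 ∈ c.erase (c.min' hc) := by
    rintro ⟨j, k⟩ hjk
    obtain ⟨hj, hk, hlt, -⟩ := mem_consecutivePairs.1 hjk
    exact mem_erase.2 ⟨((c.min'_le j hj).trans_lt hlt).ne', hk⟩
  have hinj : Set.InjOn Prod.snd (c.consecutivePairs : Set (α × α)) := by
    rintro ⟨j₁, k⟩ h₁ ⟨j₂, k'⟩ h₂ (rfl : k = k')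
    obtain ⟨hj₁, -, hlt₁, hbet₁⟩ := mem_consecutivePairs.1 h₁
    obtain ⟨hj₂, -, hlt₂, hbet₂⟩ := mem_consecutivePairs.1 h₂
    rcases lt_trichotomy j₁ j₂ with h | rfl | h
    · exact absurd ⟨h, hlt₂⟩ (hbet₁ j₂ hj₂)
    · rfl
    · exact absurd ⟨h, hlt₁⟩ (hbet₂ j₁ hj₁)
  have := card_le_card_of_injOn Prod.snd hmaps hinj
  rw [card_erase_of_mem (c.min'_mem hc)] at this
  have := hc.card_pos
  omega

lemma Finpartition.sum_card_consecutivePairs_add_card_parts_le {n : ℕ} (p : SetPartition n) :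
    ∑ c ∈ p.parts, c.consecutivePairs.card + p.parts.card ≤ n := by
  calc ∑ c ∈ p.parts, c.consecutivePairs.card + p.parts.card
      = ∑ c ∈ p.parts, (c.consecutivePairs.card + 1) := by simp [Finset.sum_add_distrib]
    _ ≤ ∑ c ∈ p.parts, c.card :=
        Finset.sum_le_sum fun c hc =>
          c.card_consecutivePairs_add_one_le (p.nonempty_of_mem_parts hc)
    _ = n := by simp [p.sum_card_parts]

end Consecutive

section ExpansionGraph

open SimpleGraph

variable {n : ℕ}

/-- `atomNode true k` is the node `A_k` of the expansion and `atomNode false k` the node `~A_k`;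
the node `.inr true` is `C(A₁,…,Aₙ)` and `.inr false` is `C*(~A₁,…,~Aₙ)`. -/
def atomNode : Bool → Fin n → (Fin n ⊕ Fin n) ⊕ Bool
  | true, k => .inl (.inl k)
  | false, k => .inl (.inr k)

def expansionRel (P : Bool → SetPartition n) (C : Bool → Finset (Fin n))
    (u v : (Fin n ⊕ Fin n) ⊕ Bool) : Prop :=
  (∃ k, atomNode true k = u ∧ atomNode false k = v) ∨
  (∃ b, ∃ c ∈ (P b).parts, ∃ j k,
    c.Consecutive j k ∧ atomNode b j = u ∧ atomNode b k = v) ∨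
  (∃ b, ∃ h : (C b).Nonempty, atomNode b ((C b).min' h) = u ∧ v = .inr b)

/-- The Danos–Regnier correctness graph of the expansion for the switching that chooses the
partition `P b` and its class `C b` at the connective link of side `b` (see
`expansionPS_drGraph_eq`). -/
def expansionGraph (P : Bool → SetPartition n) (C : Bool → Finset (Fin n)) :
    SimpleGraph ((Fin n ⊕ Fin n) ⊕ Bool) :=
  fromRel (expansionRel P C)

variable {P : Bool → SetPartition n} {C : Bool → Finset (Fin n)}

lemma expansionGraph_adj_ax (k : Fin n) :
    (expansionGraph P C).Adj (atomNode true k) (atomNode false k) :=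
  (fromRel_adj _ _ _).2 ⟨by simp [atomNode], .inl (.inl ⟨k, rfl, rfl⟩)⟩

lemma expansionGraph_adj_of_consecutive {b : Bool} {c : Finset (Fin n)} (hc : c ∈ (P b).parts)
    {j k : Fin n} (h : c.Consecutive j k) :
    (expansionGraph P C).Adj (atomNode b j) (atomNode b k) :=
  (fromRel_adj _ _ _).2 ⟨by cases b <;> simp [atomNode, h.2.2.1.ne],
    .inl (.inr (.inl ⟨b, c, hc, j, k, h, rfl, rfl⟩))⟩

lemma expansionGraph_adj_min' (b : Bool) (h : (C b).Nonempty) :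
    (expansionGraph P C).Adj (atomNode b ((C b).min' h)) (.inr b) :=
  (fromRel_adj _ _ _).2
    ⟨by cases b <;> simp [atomNode], .inl (.inr (.inr ⟨b, h, rfl, rfl⟩))⟩

lemma expansionGraph_reachable_of_mem_parts {b : Bool} {c : Finset (Fin n)}
    (hc : c ∈ (P b).parts) {j k : Fin n} (hj : j ∈ c) (hk : k ∈ c) :
    (expansionGraph P C).Reachable (atomNode b j) (atomNode b k) :=
  reachable_of_consecutive (fun _ _ => expansionGraph_adj_of_consecutive hc) hj hk

def classAtom {p q : SetPartition n} :
    {c // c ∈ p.parts} ⊕ {d // d ∈ q.parts} → (Fin n ⊕ Fin n) ⊕ Bool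
  | .inl c => atomNode true (c.1.min' (p.nonempty_of_mem_parts c.2))
  | .inr d => atomNode false (d.1.min' (q.nonempty_of_mem_parts d.2))

lemma expansionGraph_reachable_classAtom
    {u v : {c // c ∈ (P true).parts} ⊕ {d // d ∈ (P false).parts}}
    (h : (meetingGraph (P true) (P false)).Reachable u v) :
    (expansionGraph P C).Reachable (classAtom u) (classAtom v) := by
  have hstep : ∀ u v : {c // c ∈ (P true).parts} ⊕ {d // d ∈ (P false).parts},
      (∃ (c : {c // c ∈ (P true).parts}) (d : {d // d ∈ (P false).parts}),
        ((c : Finset (Fin n)) ∩ d).Nonempty ∧ u = .inl c ∧ v = .inr d) →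
      (expansionGraph P C).Reachable (classAtom u) (classAtom v) := by
    rintro _ _ ⟨c, d, ⟨x, hx⟩, rfl, rfl⟩
    rw [Finset.mem_inter] at hx
    exact (expansionGraph_reachable_of_mem_parts c.2 (Finset.min'_mem _ _) hx.1).trans <|
      (expansionGraph_adj_ax x).reachable.trans <|
      expansionGraph_reachable_of_mem_parts d.2 hx.2 (Finset.min'_mem _ _)
  rw [reachable_iff_reflTransGen] at h ⊢
  refine h.lift' _ fun u v huv => ?_
  rw [meetingGraph, fromRel_adj] at huv
  change Relation.ReflTransGen _ _ _
  rw [← reachable_iff_reflTransGen]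
  rcases huv.2 with h | h
  · exact hstep u v h
  · exact (hstep v u h).symm

lemma expansionGraph_connected (hconn : (meetingGraph (P true) (P false)).Connected)
    (hC : ∀ b, C b ∈ (P b).parts) : (expansionGraph P C).Connected := by
  let root : {c // c ∈ (P true).parts} ⊕ {d // d ∈ (P false).parts} :=
    .inl ⟨C true, hC true⟩
  have hpos : ∀ k, (expansionGraph P C).Reachable (classAtom root) (atomNode true k) := by
    intro k
    obtain ⟨c, hc, hkc⟩ := (P true).exists_mem (Finset.mem_univ k)
    exact (expansionGraph_reachable_classAtom (hconn.preconnected root (.inl ⟨c, hc⟩))).trans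
      (expansionGraph_reachable_of_mem_parts hc (Finset.min'_mem _ _) hkc)
  have hatom : ∀ b k, (expansionGraph P C).Reachable (classAtom root) (atomNode b k) := by
    rintro (_ | _) k
    · exact (hpos k).trans (expansionGraph_adj_ax k).reachable
    · exact hpos k
  refine (connected_iff_exists_forall_reachable _).2 ⟨classAtom root, ?_⟩
  rintro ((k | k) | b)
  · exact hatom true k
  · exact hatom false k
  · exact (hatom b _).trans
      (expansionGraph_adj_min' b ((P b).nonempty_of_mem_parts (hC b))).reachable

lemma expansionGraph_card_edgeSet_add_one_le (horth : (P true).Orthogonal (P false))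
    (hC : ∀ b, (C b).Nonempty) :
    Nat.card (expansionGraph P C).edgeSet + 1 ≤ Nat.card ((Fin n ⊕ Fin n) ⊕ Bool) := by
  classical
  let axEdges := Finset.univ.image fun k : Fin n => s(atomNode true k, atomNode false k)
  let classEdges := fun b => (P b).parts.biUnion fun c =>
    c.consecutivePairs.image fun jk => s(atomNode b jk.1, atomNode b jk.2)
  let conclEdges := Finset.univ.image fun b => s(atomNode b ((C b).min' (hC b)), Sum.inr b)
  let edges := axEdges ∪ (classEdges true ∪ classEdges false) ∪ conclEdges
  have hsub : (expansionGraph P C).edgeSet ⊆ ↑edges := by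
    have hrel : ∀ u v, expansionRel P C u v → s(u, v) ∈ edges := by
      rintro _ _ (⟨k, rfl, rfl⟩ | ⟨b, c, hc, j, k, hjk, rfl, rfl⟩ | ⟨b, h, rfl, rfl⟩)
      · exact Finset.mem_union_left _
          (Finset.mem_union_left _ (Finset.mem_image_of_mem _ (Finset.mem_univ k)))
      · have : s(atomNode b j, atomNode b k) ∈ classEdges b :=
          Finset.mem_biUnion.2 ⟨c, hc, Finset.mem_image.2
            ⟨(j, k), Finset.mem_consecutivePairs.2 hjk, rfl⟩⟩
        cases b <;> simp [edges, this]
      · exact Finset.mem_union_right _ (Finset.mem_image.2 ⟨b, Finset.mem_univ _, rfl⟩)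
    intro e
    refine Sym2.ind (fun u v huv => ?_) e
    rcases ((fromRel_adj _ _ _).1 huv).2 with h | h
    · exact hrel u v h
    · rw [Finset.mem_coe, Sym2.eq_swap]
      exact hrel v u h
  have hclassEdges : ∀ b, (classEdges b).card + (P b).parts.card ≤ n := fun b =>
    (add_le_add_left (Finset.card_biUnion_le.trans
      (Finset.sum_le_sum fun c _ => Finset.card_image_le)) _).trans
      (P b).sum_card_consecutivePairs_add_card_parts_le
  have hedges := Set.ncard_le_ncard hsub (Finset.finite_toSet _)
  rw [Set.ncard_coe_finset] at hedges
  have : edges.card ≤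
      (axEdges ∪ (classEdges true ∪ classEdges false)).card + conclEdges.card :=
    Finset.card_union_le _ _
  have := Finset.card_union_le axEdges (classEdges true ∪ classEdges false)
  have := Finset.card_union_le (classEdges true) (classEdges false)
  have : axEdges.card ≤ n := Finset.card_image_le.trans (by simp)
  have : conclEdges.card ≤ 2 := Finset.card_image_le.trans (by simp)
  have := hclassEdges true
  have := hclassEdges false
  have := horth.2
  rw [Nat.card_coe_set_eq]
  simp only [Nat.card_eq_fintype_card, Fintype.card_sum, Fintype.card_fin, Fintype.card_bool]
  omega

lemma expansionGraph_isTree (horth : (P true).Orthogonal (P false))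
    (hC : ∀ b, C b ∈ (P b).parts) : (expansionGraph P C).IsTree := by
  have hconn := expansionGraph_connected horth.1 hC
  refine isTree_iff_connected_and_card.2
    ⟨hconn, le_antisymm ?_ hconn.card_vert_le_card_edgeSet_add_one⟩
  exact expansionGraph_card_edgeSet_add_one_le horth fun b => (P b).nonempty_of_mem_parts (hC b)

end ExpansionGraph

section Isomorphism

variable {I : Type} {Csig : I → GenConn}

def PrePS.ConstantOnLinksExcept (S : PrePS I Csig) (r : S.Link) {β : Type*} (f : S.Node → β) :
    Prop :=
  ∀ l, l ≠ r → ∀ u ∈ S.prem l ++ S.concl l, ∀ v ∈ S.prem l ++ S.concl l, f u = f v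

namespace PreIso

variable {S T U : PrePS I Csig}

def trans (φ : PreIso S T) (ψ : PreIso T U) : PreIso S U where
  nodeEquiv := φ.nodeEquiv.trans ψ.nodeEquiv
  linkEquiv := φ.linkEquiv.trans ψ.linkEquiv
  label_eq v := (ψ.label_eq _).trans (φ.label_eq v)
  kind_eq l := (ψ.kind_eq _).trans (φ.kind_eq l)
  prem_eq l := by simp [ψ.prem_eq, φ.prem_eq]
  concl_eq l := by simp [ψ.concl_eq, φ.concl_eq]

lemma exists_kind_eq (φ : PreIso S T) (l : T.Link) : ∃ l', S.kind l' = T.kind l :=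
  ⟨φ.linkEquiv.symm l, by rw [← φ.kind_eq, Equiv.apply_symm_apply]⟩

def comapSwitching (φ : PreIso S T) (sw : DRSwitching T) : DRSwitching S where
  part l := sw.part (φ.linkEquiv l)
  selClass l := sw.selClass (φ.linkEquiv l)
  sel_mem l h := sw.sel_mem _ (by simpa only [φ.kind_eq] using h)
  valid_tens l h := sw.valid_tens _ ((φ.kind_eq l).trans h)
  valid_parr l h := sw.valid_parr _ ((φ.kind_eq l).trans h)
  valid_conn l i h := sw.valid_conn _ i ((φ.kind_eq l).trans h)
  valid_dconn l i h := sw.valid_dconn _ i ((φ.kind_eq l).trans h)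
  valid_other l h := sw.valid_other _ (by simpa only [φ.kind_eq] using h)

def drGraphIso (φ : PreIso S T) (sw : DRSwitching T) :
    S.drGraph (φ.comapSwitching sw) ≃g T.drGraph sw where
  toEquiv := φ.nodeEquiv
  map_rel_iff' {u v} := by
    have hinj := φ.nodeEquiv.injective
    have hpair : ∀ (l : List S.Node) (u v : S.Node),
        l.map φ.nodeEquiv = [φ.nodeEquiv u, φ.nodeEquiv v] ↔ l = [u, v] := fun l u v =>
      (List.map_injective_iff.2 hinj).eq_iff (b := [u, v])
    simp only [PrePS.drGraph, SimpleGraph.fromRel_adj, hinj.ne_iff, hpair,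
      φ.linkEquiv.surjective.exists, φ.kind_eq, φ.prem_eq, φ.concl_eq, comapSwitching,
      List.getElem?_map, Option.map_eq_some_iff, hinj.eq_iff, exists_eq_right, List.mem_map]

lemma constantOnLinksExcept_comp (φ : PreIso S T) {r : S.Link}
    {β : Type*} {f : T.Node → β} (h : T.ConstantOnLinksExcept (φ.linkEquiv r) f) :
    S.ConstantOnLinksExcept r (f ∘ φ.nodeEquiv) := by
  have hmem : ∀ l u, u ∈ S.prem l ++ S.concl l →
      φ.nodeEquiv u ∈ T.prem (φ.linkEquiv l) ++ T.concl (φ.linkEquiv l) := fun l u hu => by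
    rw [φ.prem_eq, φ.concl_eq, ← List.map_append]
    exact List.mem_map_of_mem hu
  exact fun l hl u hu v hv => h _ (φ.linkEquiv.injective.ne hl) _ (hmem l u hu) _ (hmem l v hv)

end PreIso

lemma PrePS.DRProofNet.of_preIso {S T : PrePS I Csig} (h : S.DRProofNet) (φ : PreIso S T) :
    T.DRProofNet := fun sw =>
  ⟨(φ.drGraphIso sw).connected_iff.1 (h _).1, (φ.drGraphIso sw).isAcyclic_iff.1 (h _).2⟩

end Isomorphism

section Expansion

variable {I : Type} {Csig : I → GenConn} {i : I} {a : Fin (Csig i).arity → ℕ}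

abbrev expansionPS (i : I) (a : Fin (Csig i).arity → ℕ) : PrePS I Csig where
  Node := (Fin (Csig i).arity ⊕ Fin (Csig i).arity) ⊕ Bool
  label
    | .inl (.inl k) => .pos (a k)
    | .inl (.inr k) => .neg (a k)
    | .inr true => .conn i fun k => .pos (a k)
    | .inr false => .dconn i fun k => .neg (a k)
  Link := Fin (Csig i).arity ⊕ Bool
  kind
    | .inl _ => .ax
    | .inr true => .conn i
    | .inr false => .dconn i
  prem
    | .inl _ => []
    | .inr b => List.ofFn (atomNode b)
  concl
    | .inl k => [atomNode true k, atomNode false k]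
    | .inr b => [.inr b]

lemma IsExpansionPS.nonempty_preIso {S : PrePS I Csig} (hS : IsExpansionPS i a S) :
    Nonempty (PreIso (expansionPS i a) S) := by
  obtain ⟨eN, eL, hpos, hneg, hconn, hdconn, hax, hkc, hpc, hcc, hkd, hpd, hcd⟩ := hS
  refine ⟨⟨eN.symm, eL.symm, ?_, ?_, ?_, ?_⟩⟩
  · rintro ((k | k) | (_ | _))
    exacts [hpos k, hneg k, hdconn, hconn]
  · rintro (k | (_ | _))
    exacts [(hax k).1, hkd, hkc]
  · rintro (k | (_ | _))
    exacts [(hax k).2.1, hpd.trans List.map_ofFn.symm, hpc.trans List.map_ofFn.symm]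
  · rintro (k | (_ | _))
    exacts [(hax k).2.2, hcd, hcc]

lemma expansionPS_drGraph_eq (sw : DRSwitching (expansionPS i a))
    {P : Bool → SetPartition (Csig i).arity} {C : Bool → Finset (Fin (Csig i).arity)}
    (hpart : ∀ b, sw.part (.inr b) = partsToNat (P b))
    (hsel : ∀ b, sw.selClass (.inr b) = (C b).image Fin.val) :
    (expansionPS i a).drGraph sw = expansionGraph P C := by
  have hax : ∀ k, sw.part (.inl k) = ∅ ∧ sw.selClass (.inl k) = ∅ :=
    fun k => sw.valid_other (.inl k) (.inl rfl)
  simp only [PrePS.drGraph, expansionGraph]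
  congr
  ext u v
  simp [expansionRel, Sum.exists, hax, hpart, hsel, partsToNat, Finset.Consecutive, and_assoc,
    Finset.min'_image Fin.val_strictMono.monotone]

lemma expansionPS_drProofNet : (expansionPS i a).DRProofNet := by
  intro sw
  obtain ⟨p, hp, hpart_p⟩ := sw.valid_conn (.inr true) i rfl
  obtain ⟨q, hq, hpart_q⟩ := sw.valid_dconn (.inr false) i rfl
  let P : Bool → SetPartition (Csig i).arity := fun b => bif b then p else q
  have hpart : ∀ b, sw.part (.inr b) = partsToNat (P b) := by
    rintro (_ | _)
    exacts [hpart_q, hpart_p]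
  have hsel_mem : ∀ b, sw.selClass (.inr b) ∈ partsToNat (P b) := fun b =>
    hpart b ▸ sw.sel_mem (.inr b) (by cases b <;> simp)
  choose C hC hsel using fun b => Finset.mem_image.1 (hsel_mem b)
  rw [expansionPS_drGraph_eq sw hpart fun b => (hsel b).symm]
  have htree := expansionGraph_isTree ((Csig i).orthogonal_of_mem hp hq) hC
  exact ⟨htree.connected, htree.isAcyclic⟩

lemma expansionPS_eq_of_constantOnLinksExcept {b : Bool} {β : Type*}
    {f : (expansionPS i a).Node → β} (h : (expansionPS i a).ConstantOnLinksExcept (.inr b) f)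
    {u : (expansionPS i a).Node} (hu : u ≠ .inr b) : f u = f (.inr !b) := by
  have hprem : ∀ k, f (atomNode (!b) k) = f (.inr !b) := fun k =>
    h (.inr !b) (by simp) _ (by simp) _ (by simp)
  have hax : ∀ k, f (atomNode true k) = f (atomNode false k) := fun k =>
    h (.inl k) (by simp) _ (by simp) _ (by simp)
  rcases u with ((k | k) | b')
  · cases b
    exacts [hprem k, (hax k).trans (hprem k)]
  · cases b
    exacts [(hax k).symm.trans (hprem k), hprem k]
  · cases b <;> cases b' <;> simp_all

/-- Read `comp` as a distribution of the nodes of `T` into `k` components that only the link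
`r` joins together: in the expansion the axiom links and the other connective link keep all
nodes but the conclusion of `r` connected, so there is a single component. -/
lemma eq_one_of_preIso_expansionPS {T : PrePS I Csig} (χ : PreIso (expansionPS i a) T)
    (r : T.Link) (hr : T.kind r ≠ .ax) {k : ℕ} (comp : T.Node → Option (Fin k))
    (hcomp : T.ConstantOnLinksExcept r comp) (hroot : ∀ u, comp u = none ↔ u ∈ T.concl r)
    (hsurj : ∀ j, ∃ u, comp u = some j) : k = 1 := by
  obtain ⟨k' | b, rfl⟩ := χ.linkEquiv.surjective r
  · exact absurd (χ.kind_eq _) hr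
  have hconcl : T.concl (χ.linkEquiv (.inr b)) = [χ.nodeEquiv (.inr b)] := χ.concl_eq _
  have hconst : ∀ v, v ≠ .inr b → comp (χ.nodeEquiv v) = comp (χ.nodeEquiv (.inr !b)) :=
    fun _ hv => expansionPS_eq_of_constantOnLinksExcept (χ.constantOnLinksExcept_comp hcomp) hv
  obtain ⟨j₀, hj₀⟩ : ∃ j₀, comp (χ.nodeEquiv (.inr !b)) = some j₀ := by
    refine Option.ne_none_iff_exists'.1 fun hnone => ?_
    rw [hroot, hconcl, List.mem_singleton, χ.nodeEquiv.apply_eq_iff_eq] at hnone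
    cases b <;> simp at hnone
  rw [← Fintype.card_fin k, Fintype.card_eq_one_iff]
  refine ⟨j₀, fun j => ?_⟩
  obtain ⟨u, hu⟩ := hsurj j
  obtain ⟨v, rfl⟩ := χ.nodeEquiv.surjective u
  have hv : v ≠ .inr b := by
    rintro rfl
    rw [(hroot _).2 (by simp [hconcl])] at hu
    cases hu
  simpa only [hu, hj₀, Option.some.injEq] using hconst v hv

lemma toPre_node_nonempty {Γ : List (Formula I Csig)} (d : Deriv Csig Γ) :
    Nonempty (toPre d).S.Node := by
  induction d with
  | ax m => exact ⟨(0 : Fin 2)⟩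
  | exch e he d ih => exact ih
  | cut A d₁ d₂ ih₁ ih₂ => exact ih₁.map Sum.inl
  | tens | parr | conn | dconn => exact ⟨.inr ()⟩

lemma expansionPS_isEmpty_preIso_toPre (hnt : ¬ IsTensorSet (Csig i).rules)
    (hnp : ¬ IsParSet (Csig i).rules) {Γ : List (Formula I Csig)} (d : Deriv Csig Γ) :
    IsEmpty (PreIso (expansionPS i a) (toPre d).S) := by
  induction d with
  | ax m => exact ⟨fun χ => by simpa [toPre] using χ.kind_eq (.inr true)⟩
  | exch e he d ih => exact ih
  | cut | tens | parr =>
    refine ⟨fun χ => ?_⟩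
    obtain ⟨(k | _ | _), h⟩ := χ.exists_kind_eq (.inr ()) <;> simp [toPre] at h
  | @conn i' A p hp k cls hcls hinj Γs prems ih | @dconn i' A p hp k cls hcls hinj Γs prems ih =>
    refine ⟨fun χ => ?_⟩
    obtain ⟨l, hl⟩ := χ.exists_kind_eq (.inr ())
    rcases l with _ | (_ | _) <;> simp [toPre] at hl
    subst hl
    -- the `j`-th subproof of the last rule is the component `some j`
    have hcard : p.parts.card = 1 := by
      rw [Finpartition.card_parts_eq_of_enum hcls hinj]
      refine eq_one_of_preIso_expansionPS χ (.inr ()) (by simp [toPre])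
        (Sum.elim (fun x => some x.1) fun _ => none) ?_ ?_ ?_
      · rintro (⟨j, l⟩ | ⟨⟩) hne u hu v hv
        · rcases List.mem_append.1 hu with hu | hu <;>
            rcases List.mem_append.1 hv with hv | hv <;>
            obtain ⟨_, -, rfl⟩ := List.mem_map.1 hu <;>
            obtain ⟨_, -, rfl⟩ := List.mem_map.1 hv <;>
            rfl
        · exact absurd rfl hne
      · rintro (⟨j, w⟩ | ⟨⟩)
        · exact iff_of_false (by simp) fun h => by cases List.mem_singleton.1 h
        · exact iff_of_true rfl (List.mem_singleton_self _)
      · intro j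
        obtain ⟨w⟩ := toPre_node_nonempty (prems j)
        exact ⟨.inl ⟨j, w⟩, rfl⟩
    first
      | exact hnp (GenConn.isParSet_of_card_parts_eq_one _ hp hcard)
      | exact hnt (GenConn.isTensorSet_of_dual_card_parts_eq_one _ hp hcard)

end Expansion

theorem DR_correct_not_sequentializable_general {I : Type} {Csig : I → GenConn} (i : I)
    (hnt : ¬ IsTensorSet (Csig i).rules) (hnp : ¬ IsParSet (Csig i).rules)
    (a : Fin (Csig i).arity → ℕ)
    (S : ProofStructure I Csig) (hS : IsExpansionPS i a S.pre) :
    (S.pre.DRProofNet ∧ ¬ Sequentializable S) ∧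
    ∃ T : ProofStructure I Csig, T.pre.DRProofNet ∧ ¬ Sequentializable T := by
  obtain ⟨ψ⟩ := hS.nonempty_preIso
  have hcorrect : S.pre.DRProofNet := expansionPS_drProofNet.of_preIso ψ
  have hnotseq : ¬ Sequentializable S := fun ⟨_, d, ⟨φ⟩⟩ =>
    (expansionPS_isEmpty_preIso_toPre hnt hnp d).false (ψ.trans φ)
  exact ⟨⟨hcorrect, hnotseq⟩, S, hcorrect, hnotseq⟩

/-- **Failure of sequentialization for the Danos–Regnier switching:** for any dual pair
`(C, C*)` of `n`-ary generalized connectives with `C ≠ ⊗ⁿ` and `C ≠ ⅋ⁿ` (i.e. `P_C` is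
neither the partition set of all singletons nor the one-class partition set), the
proof-structure `S` with exactly two terminal nodes `C(A₁,…,Aₙ)` and `C*(~A₁,…,~Aₙ)`
(the `A_k` distinct atoms, joined by atomic axiom links) is correct in the sense of the
Danos–Regnier switching but is not sequentializable; hence there exists a
Danos–Regnier-correct proof-structure that is not sequentializable. -/
theorem DR_correct_not_sequentializable {I : Type} {Csig : I → GenConn} (i : I)
    (hnt : ¬ IsTensorSet (Csig i).rules) (hnp : ¬ IsParSet (Csig i).rules)
    (a : Fin (Csig i).arity → ℕ) (ha : Function.Injective a)
    (S : ProofStructure I Csig) (hS : IsExpansionPS i a S.pre) :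
    (S.pre.DRProofNet ∧ ¬ Sequentializable S) ∧
    ∃ T : ProofStructure I Csig, T.pre.DRProofNet ∧ ¬ Sequentializable T :=
  DR_correct_not_sequentializable_general i hnt hnp a S hS
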